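/- Let G be a finite group with a minimal cover 𝓜, and suppose M₁, M₂ ∈ 𝓜 are distinct normal subgroups of prime index p with G/(M₁ ∩ M₂) ≅ C_p × C_p and σ(G) = p + 1. Then every member of 𝓜 contains M₁ ∩ M₂, and {X/(M₁∩M₂) : X ∈ 𝓜} is the set of all p+1 maximal subgroups of G/(M₁∩M₂). -/

import Mathlib

def IsCover {G : Type*} [Group G] (𝒳 : Finset (Subgroup G)) : Prop :=
  (∀ X ∈ 𝒳, X ≠ ⊤) ∧ ∀ g : G, ∃ X ∈ 𝒳, g ∈ X

noncomputable def covNum (G : Type*) [Group G] : ℕ :=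
  sInf {n | ∃ 𝒳 : Finset (Subgroup G), IsCover 𝒳 ∧ 𝒳.card = n}

def IsMinimalCover {G : Type*} [Group G] (𝒳 : Finset (Subgroup G)) : Prop :=
  IsCover 𝒳 ∧ 𝒳.card = covNum G

def IsDiagonalType {H₁ H₂ : Type*} [Group H₁] [Group H₂] (M : Subgroup (H₁ × H₂)) : Prop :=
  ∃ (N₁ : Subgroup H₁) (N₂ : Subgroup H₂) (h₁ : N₁.Normal) (h₂ : N₂.Normal),
    haveI := h₁
    haveI := h₂
    IsSimpleGroup (H₁ ⧸ N₁) ∧ ∃ φ : (H₁ ⧸ N₁) ≃* (H₂ ⧸ N₂),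
      (M : Set (H₁ × H₂)) = {x | φ (QuotientGroup.mk x.1) = QuotientGroup.mk x.2}

/-!
Let `N = M₁ ⊓ M₂`, write `q : G → G/N`, and call a member `X` of the cover a *supplement* when
`q X = G/N`. Two distinct members never lie in a common proper subgroup (otherwise replace them by
it), and a `p`-group is never covered by `p` proper subgroups; these two facts drive everything.

No member is a supplement. Otherwise there are at most `p - 1` of them (`M₁`, `M₂` are not), so
some `c ≠ 1` of `G/N` lies in the image of no non-supplement. Fix a Sylow `p`-subgroup `P`, so that
`q P = G/N`. For `u ∈ P` over `c` and `v ∈ N` the elements `u ^ a * v`, `0 < a < p`, lie in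
supplements only, and pigeonhole gives one supplement containing both `u` and `v`. Covering the
`p`-group `P ∩ q⁻¹⟨c⟩` then puts it inside a supplement `B` with `P ⊄ B` (the supplements containing
`P` cannot exhaust `N`, as they would cover `G` with fewer than `σ(G)` members), and then
`q (B ⊓ P) = ⟨c⟩`. Since `B ≠ G` misses some `v ∈ N`, the supplement through `u` and `v` is a
second one meeting `P` over `c`; dropping it, the lines `q (B' ⊓ P)` of the other supplements and
the images of the non-supplements still cover `G/N`, by at most `p` proper subgroups.

Once every image is proper, it lies in a line `⟨c⟩` into which no other member maps, so `X`
contains every fibre over `⟨c⟩ \ {1}`; hence `N ≤ X` and `q X = ⟨c⟩`.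
-/

open Finset Subgroup QuotientGroup

lemma covNum_le_card {G : Type*} [Group G] {𝒳 : Finset (Subgroup G)} (h : IsCover 𝒳) :
    covNum G ≤ #𝒳 :=
  Nat.sInf_le ⟨𝒳, h, rfl⟩

lemma IsMinimalCover.eq_of_le_of_le {G : Type*} [Group G] {𝓜 : Finset (Subgroup G)}
    (hmin : IsMinimalCover 𝓜) {X Y H : Subgroup G} (hX : X ∈ 𝓜) (hY : Y ∈ 𝓜) (hH : H ≠ ⊤)
    (hXH : X ≤ H) (hYH : Y ≤ H) : X = Y := by
  classical
  by_contra hXY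
  have hcov : IsCover (insert H ((𝓜.erase X).erase Y)) := by
    refine ⟨fun Z hZ => ?_, fun g => ?_⟩
    · rcases mem_insert.1 hZ with rfl | hZ
      · exact hH
      · exact hmin.1.1 Z (mem_of_mem_erase (mem_of_mem_erase hZ))
    · obtain ⟨Z, hZ, hgZ⟩ := hmin.1.2 g
      by_cases hZXY : Z = X ∨ Z = Y
      · refine ⟨H, mem_insert_self _ _, ?_⟩
        rcases hZXY with rfl | rfl
        exacts [hXH hgZ, hYH hgZ]
      · push Not at hZXY
        exact ⟨Z, mem_insert_of_mem (mem_erase.2 ⟨hZXY.2, mem_erase.2 ⟨hZXY.1, hZ⟩⟩), hgZ⟩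
  have h2 : 2 ≤ #𝓜 := one_lt_card.2 ⟨X, hX, Y, hY, hXY⟩
  have := (covNum_le_card hcov).trans (card_insert_le _ _)
  rw [card_erase_of_mem (mem_erase.2 ⟨Ne.symm hXY, hY⟩), card_erase_of_mem hX, ← hmin.2] at this
  omega

section PGroup

variable {G : Type*} [Group G] [Finite G]

lemma Subgroup.card_le_one_add_sum_card_inf_sub_one (K : Subgroup G) (𝓗 : Finset (Subgroup G))
    (hcov : ∀ x ∈ K, ∃ H ∈ 𝓗, x ∈ H) : Nat.card K ≤ 1 + ∑ H ∈ 𝓗, (Nat.card ↥(H ⊓ K) - 1) := by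
  classical
  have := Fintype.ofFinite G
  have hcard (L : Subgroup G) : #(univ.filter (· ∈ L)) = Nat.card L := by
    rw [Nat.card_eq_fintype_card]; exact (Fintype.card_subtype _).symm
  calc Nat.card K = #(univ.filter (· ∈ K)) := (hcard K).symm
    _ ≤ #(insert 1 (𝓗.biUnion fun H => (univ.filter (· ∈ H ⊓ K)).erase 1)) := by
        refine card_le_card fun x hx => ?_
        obtain ⟨H, hH, hxH⟩ := hcov x (mem_filter.1 hx).2
        by_cases hx1 : x = 1
        · exact hx1 ▸ mem_insert_self _ _
        · exact mem_insert_of_mem (mem_biUnion.2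
            ⟨H, hH, mem_erase.2 ⟨hx1, mem_filter.2 ⟨mem_univ _, hxH, (mem_filter.1 hx).2⟩⟩⟩)
    _ ≤ 1 + ∑ H ∈ 𝓗, #((univ.filter (· ∈ H ⊓ K)).erase 1) :=
        (card_insert_le _ _).trans (by rw [add_comm]; gcongr; exact card_biUnion_le)
    _ = 1 + ∑ H ∈ 𝓗, (Nat.card ↥(H ⊓ K) - 1) := by
        simp_rw [card_erase_of_mem (mem_filter.2 ⟨mem_univ _, one_mem _⟩), hcard]

variable {p : ℕ} [hp : Fact p.Prime]

lemma IsPGroup.mul_card_le_card_of_lt {H K : Subgroup G} (hK : IsPGroup p K) (hHK : H < K) :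
    p * Nat.card H ≤ Nat.card K := by
  obtain ⟨n, hn⟩ := IsPGroup.iff_card.mp hK
  obtain ⟨i, hin, hi⟩ := (Nat.dvd_prime_pow hp.out).mp (hn ▸ card_dvd_of_le hHK.le)
  have hne : i ≠ n := fun h => hHK.ne (eq_of_le_of_card_ge hHK.le (by rw [hn, hi, h]))
  calc p * Nat.card H = p ^ (i + 1) := by rw [hi, pow_succ, mul_comm]
    _ ≤ p ^ n := Nat.pow_le_pow_right hp.out.pos (by omega)
    _ = Nat.card K := hn.symm

theorem IsPGroup.exists_le_of_forall_exists_mem {K : Subgroup G} (hK : IsPGroup p K)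
    {𝓗 : Finset (Subgroup G)} (h𝓗 : #𝓗 ≤ p) (hcov : ∀ x ∈ K, ∃ H ∈ 𝓗, x ∈ H) :
    ∃ H ∈ 𝓗, K ≤ H := by
  by_contra! hK'
  have hsmall (H) (hH : H ∈ 𝓗) : p * Nat.card ↥(H ⊓ K) ≤ Nat.card K :=
    hK.mul_card_le_card_of_lt (inf_le_right.lt_of_ne fun h => hK' H hH (h ▸ inf_le_left))
  obtain ⟨H₀, hH₀, -⟩ := hcov 1 K.one_mem
  have hpK : p ≤ Nat.card K := (Nat.le_mul_of_pos_right p Nat.card_pos).trans (hsmall H₀ hH₀)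
  have hsum : p * ∑ H ∈ 𝓗, (Nat.card ↥(H ⊓ K) - 1) ≤ p * (Nat.card K - p) :=
    calc p * ∑ H ∈ 𝓗, (Nat.card ↥(H ⊓ K) - 1)
        = ∑ H ∈ 𝓗, (p * Nat.card ↥(H ⊓ K) - p) := by
          rw [mul_sum]; simp_rw [Nat.mul_sub_one]
      _ ≤ ∑ _H ∈ 𝓗, (Nat.card K - p) :=
          sum_le_sum fun H hH => Nat.sub_le_sub_right (hsmall H hH) p
      _ = #𝓗 * (Nat.card K - p) := by rw [sum_const, smul_eq_mul]
      _ ≤ p * (Nat.card K - p) := Nat.mul_le_mul_right _ h𝓗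
  have := K.card_le_one_add_sum_card_inf_sub_one 𝓗 hcov
  have := Nat.le_of_mul_le_mul_left hsum hp.out.pos
  have := hp.out.two_le
  omega

theorem Sylow.map_eq_top_of_isPGroup {G' : Type*} [Group G'] {f : G →* G'}
    (hf : Function.Surjective f) (hG' : IsPGroup p G') (P : Sylow p G) :
    (P : Subgroup G).map f = ⊤ := by
  simpa using ((P.mapSurjective hf).is_maximal' (hG'.to_subgroup ⊤) le_top).symm

end PGroup

lemma Subgroup.le_of_inf_le_of_map_inf_eq_top {G : Type*} [Group G] {N : Subgroup G} [N.Normal]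
    {P B : Subgroup G} (hPN : P ⊓ N ≤ B) (hmap : (B ⊓ P).map (mk' N) = ⊤) : P ≤ B := by
  intro x hx
  obtain ⟨y, hy, hyx⟩ : mk' N x ∈ (B ⊓ P).map (mk' N) := hmap ▸ mem_top _
  have : y⁻¹ * x ∈ P ⊓ N := ⟨P.mul_mem (P.inv_mem hy.2) hx, QuotientGroup.eq.mp hyx⟩
  simpa using B.mul_mem hy.1 (hPN this)

section ExponentPrime

variable {Q : Type*} [Group Q] {p : ℕ} [hp : Fact p.Prime]

lemma card_le_of_ne_top_of_card_eq_sq [Finite Q] (hcard : Nat.card Q = p ^ 2) {H : Subgroup Q}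
    (hH : H ≠ ⊤) : Nat.card H ≤ p := by
  have := ((IsPGroup.of_card hcard).to_subgroup ⊤).mul_card_le_card_of_lt (lt_top_iff_ne_top.2 hH)
  rw [card_top, hcard, sq] at this
  exact Nat.le_of_mul_le_mul_left this hp.out.pos

lemma zpowers_ne_top (hcard : Nat.card Q = p ^ 2) (hexp : ∀ x : Q, x ^ p = 1) {c : Q}
    (hc : c ≠ 1) : zpowers c ≠ ⊤ := by
  intro h
  have := Nat.card_zpowers c
  rw [h, card_top, hcard, orderOf_eq_prime (hexp c) hc] at this
  have := hp.out.two_le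
  nlinarith

lemma eq_zpowers_of_ne_top [Finite Q] (hcard : Nat.card Q = p ^ 2) (hexp : ∀ x : Q, x ^ p = 1)
    {H : Subgroup Q} (hH : H ≠ ⊤) {c : Q} (hc : c ∈ H) (hc1 : c ≠ 1) : H = zpowers c :=
  (eq_of_le_of_card_ge (zpowers_le.2 hc) (by
    rw [Nat.card_zpowers, orderOf_eq_prime (hexp c) hc1]
    exact card_le_of_ne_top_of_card_eq_sq hcard hH)).symm

lemma isCoatom_zpowers [Finite Q] (hcard : Nat.card Q = p ^ 2) (hexp : ∀ x : Q, x ^ p = 1)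
    {c : Q} (hc : c ≠ 1) : IsCoatom (zpowers c) :=
  ⟨zpowers_ne_top hcard hexp hc, fun H hH => by
    by_contra hH'
    exact hH.ne (eq_zpowers_of_ne_top hcard hexp hH' (hH.le (mem_zpowers c)) hc).symm⟩

lemma exists_le_zpowers [Finite Q] (hcard : Nat.card Q = p ^ 2) (hexp : ∀ x : Q, x ^ p = 1)
    {H : Subgroup Q} (hH : H ≠ ⊤) : ∃ c ≠ 1, H ≤ zpowers c := by
  rcases H.bot_or_exists_ne_one with rfl | ⟨c, hc, hc1⟩
  · rcases (⊤ : Subgroup Q).bot_or_exists_ne_one with h | ⟨c, -, hc1⟩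
    · exact absurd h.symm hH
    · exact ⟨c, hc1, bot_le⟩
  · exact ⟨c, hc1, (eq_zpowers_of_ne_top hcard hexp hH hc hc1).le⟩

end ExponentPrime

section Supplements

variable {G : Type*} [Group G] (𝓜 : Finset (Subgroup G)) (N : Subgroup G) [N.Normal]

open Classical in
noncomputable def supplements : Finset (Subgroup G) :=
  𝓜.filter fun X => X.map (mk' N) = ⊤

def onlyInSupplements : Set (G ⧸ N) :=
  {c | c ≠ 1 ∧ ∀ X ∈ 𝓜, c ∈ X.map (mk' N) → X.map (mk' N) = ⊤}

variable {𝓜 N}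

lemma mem_supplements {X : Subgroup G} :
    X ∈ supplements 𝓜 N ↔ X ∈ 𝓜 ∧ X.map (mk' N) = ⊤ := by
  classical
  simp [supplements]

lemma supplements_subset : supplements 𝓜 N ⊆ 𝓜 := fun _ hX => (mem_supplements.1 hX).1

lemma mem_sdiff_supplements [DecidableEq (Subgroup G)] {X : Subgroup G} :
    X ∈ 𝓜 \ supplements 𝓜 N ↔ X ∈ 𝓜 ∧ X.map (mk' N) ≠ ⊤ := by
  rw [mem_sdiff, mem_supplements]
  tauto

lemma IsCover.exists_mem_supplements (hcov : IsCover 𝓜) {g : G}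
    (hg : mk' N g ∈ onlyInSupplements 𝓜 N) : ∃ B ∈ supplements 𝓜 N, g ∈ B := by
  obtain ⟨X, hX, hgX⟩ := hcov.2 g
  exact ⟨X, mem_supplements.2 ⟨hX, hg.2 X hX (mem_map_of_mem _ hgX)⟩, hgX⟩

lemma exists_mem_map_ne_top_of_not_mem {M : Subgroup G} (hM : M ∈ 𝓜) (hMN : M.map (mk' N) ≠ ⊤)
    {x : G ⧸ N} (hx : x ∉ onlyInSupplements 𝓜 N) :
    ∃ X ∈ 𝓜, X.map (mk' N) ≠ ⊤ ∧ x ∈ X.map (mk' N) := by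
  by_cases hx1 : x = 1
  · exact ⟨M, hM, hMN, hx1 ▸ one_mem _⟩
  by_contra! h
  exact hx ⟨hx1, fun X hX hxX => by_contra fun hX' => h X hX hX' hxX⟩

lemma IsCover.exists_mem_forall_not_mem (hcov : IsCover 𝓜)
    (h𝓑 : #(supplements 𝓜 N) < covNum G) {P : Subgroup G} (hP : P.map (mk' N) = ⊤) :
    ∃ w ∈ N, ∀ B ∈ supplements 𝓜 N, P ≤ B → w ∉ B := by
  classical
  by_contra! h
  have hcov' : IsCover ((supplements 𝓜 N).filter (P ≤ ·)) := by
    refine ⟨fun X hX => hcov.1 X (supplements_subset (mem_filter.1 hX).1), fun g => ?_⟩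
    obtain ⟨x, hxP, hx⟩ : mk' N g ∈ P.map (mk' N) := hP ▸ mem_top _
    obtain ⟨B, hB, hPB, hB'⟩ := h (x⁻¹ * g) (QuotientGroup.eq.mp hx)
    exact ⟨B, mem_filter.2 ⟨hB, hPB⟩, by simpa using B.mul_mem (hPB hxP) hB'⟩
  exact h𝓑.not_ge ((covNum_le_card hcov').trans (card_filter_le _ _))

variable [Finite G] {p : ℕ} [hp : Fact p.Prime]

lemma mem_onlyInSupplements_of_mem_zpowers (hcard : Nat.card (G ⧸ N) = p ^ 2)
    (hexp : ∀ x : G ⧸ N, x ^ p = 1) {c d : G ⧸ N} (hc : c ∈ onlyInSupplements 𝓜 N)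
    (hd : d ∈ zpowers c) (hd1 : d ≠ 1) : d ∈ onlyInSupplements 𝓜 N := by
  refine ⟨hd1, fun X hX hdX => hc.2 X hX ?_⟩
  have := eq_zpowers_of_ne_top hcard hexp (zpowers_ne_top hcard hexp hc.1) hd hd1
  exact zpowers_le.1 (this.le.trans (zpowers_le.2 hdX))

/-- If no supplement contained both `u` and `v`, the elements `u ^ a * v`, `0 < a < p`, would need
`p - 1` distinct supplements, none of them the one containing `u`. -/
lemma IsCover.exists_mem_supplements_mem_and_mem (hcov : IsCover 𝓜)
    (hcard : Nat.card (G ⧸ N) = p ^ 2) (hexp : ∀ x : G ⧸ N, x ^ p = 1)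
    (h𝓑 : #(supplements 𝓜 N) < p) {P : Subgroup G} (hPp : IsPGroup p P) {u : G} (huP : u ∈ P)
    (hu : mk' N u ∈ onlyInSupplements 𝓜 N) {v : G} (hv : v ∈ N) :
    ∃ B ∈ supplements 𝓜 N, u ∈ B ∧ v ∈ B := by
  classical
  by_contra! hsep
  obtain ⟨B₀, hB₀, huB₀⟩ := hcov.exists_mem_supplements hu
  have hgen (a : ℕ) (ha : a ∈ Ioo 0 p) : u ∈ zpowers (u ^ a) := by
    rw [mem_Ioo] at ha
    have := hPp.orderOf_coprime ((Nat.Prime.coprime_iff_not_dvd hp.out).2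
      (Nat.not_dvd_of_pos_of_lt ha.1 ha.2)) ⟨u, huP⟩
    exact mem_zpowers_pow_iff.2 (Subgroup.orderOf_mk u huP ▸ this).symm
  have hnot (B) (hB : B ∈ supplements 𝓜 N) (a) (h : u ^ a * v ∈ B) : u ∉ B :=
    fun huB => hsep B hB huB (by simpa using B.mul_mem (B.inv_mem (B.pow_mem huB a)) h)
  have hcover : ∀ a ∈ Ioo 0 p, ∃ B ∈ supplements 𝓜 N, u ^ a * v ∈ B := fun a ha => by
    rw [mem_Ioo] at ha
    refine hcov.exists_mem_supplements (mem_onlyInSupplements_of_mem_zpowers hcard hexp hu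
      (d := mk' N (u ^ a * v)) (by simp [(QuotientGroup.eq_one_iff v).2 hv]) ?_)
    simpa [(QuotientGroup.eq_one_iff v).2 hv] using
      pow_ne_one_of_lt_orderOf ha.1.ne' (orderOf_eq_prime (hexp _) hu.1 ▸ ha.2)
  choose! F hF using hcover
  have hlt (a) (ha : a ∈ Ioo 0 p) (b) (hb : b ∈ Ioo 0 p) (hab : a < b) : F a ≠ F b := fun h => by
    have hba : u ^ (b - a) ∈ F b := by
      have := (F b).mul_mem (hF b hb).2 ((F b).inv_mem (h ▸ (hF a ha).2))
      rwa [mul_inv_rev, mul_assoc, mul_inv_cancel_left, ← pow_sub u hab.le] at this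
    have := mem_Ioo.1 hb
    exact hnot _ (hF b hb).1 b (hF b hb).2 (zpowers_le.2 hba (hgen _ (by simp; omega)))
  have hinj : Set.InjOn F (Ioo 0 p) := fun a ha b hb h => by
    rcases lt_trichotomy a b with hab | rfl | hab
    exacts [absurd h (hlt a ha b hb hab), rfl, absurd h.symm (hlt b hb a ha hab)]
  have hmaps : Set.MapsTo F (Ioo 0 p) ((supplements 𝓜 N).erase B₀) := fun a ha =>
    mem_erase.2 ⟨fun h => hnot _ (hF a ha).1 a (hF a ha).2 (h ▸ huB₀), (hF a ha).1⟩
  have := card_le_card_of_injOn F hmaps hinj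
  rw [card_erase_of_mem hB₀, Nat.card_Ioo] at this
  have := hp.out.two_le
  omega

lemma IsCover.exists_mem_supplements_inf_comap_le (hcov : IsCover 𝓜)
    (hcard : Nat.card (G ⧸ N) = p ^ 2) (hexp : ∀ x : G ⧸ N, x ^ p = 1)
    (h𝓑 : #(supplements 𝓜 N) < p) {P : Subgroup G} (hPp : IsPGroup p P)
    (hP : P.map (mk' N) = ⊤) {c : G ⧸ N} (hc : c ∈ onlyInSupplements 𝓜 N) {v : G} (hv : v ∈ N) :
    ∃ B ∈ supplements 𝓜 N, P ⊓ (zpowers c).comap (mk' N) ≤ B ∧ v ∈ B := by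
  classical
  obtain ⟨H, hH, hKH⟩ := (hPp.to_le inf_le_left).exists_le_of_forall_exists_mem
    (𝓗 := insert N ((supplements 𝓜 N).filter (v ∈ ·)))
    ((card_insert_le _ _).trans (by have := card_filter_le (supplements 𝓜 N) (v ∈ ·); omega))
    (fun x hx => by
      by_cases hx1 : mk' N x = 1
      · exact ⟨N, mem_insert_self _ _, (QuotientGroup.eq_one_iff x).1 hx1⟩
      obtain ⟨B, hB, hxB, hvB⟩ := hcov.exists_mem_supplements_mem_and_mem hcard hexp h𝓑 hPp
        hx.1 (mem_onlyInSupplements_of_mem_zpowers hcard hexp hc (mem_comap.1 (mem_inf.1 hx).2) hx1)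
        hv
      exact ⟨B, mem_insert_of_mem (mem_filter.2 ⟨hB, hvB⟩), hxB⟩)
  rcases mem_insert.1 hH with hHN | hH
  · obtain ⟨x, hxP, rfl⟩ : c ∈ P.map (mk' N) := hP ▸ mem_top c
    exact absurd ((QuotientGroup.eq_one_iff x).2 (hHN ▸ hKH ⟨hxP, mem_zpowers _⟩)) hc.1
  · exact ⟨H, (mem_filter.1 hH).1, hKH, (mem_filter.1 hH).2⟩

lemma IsCover.exists_mem_supplements_inf_le_not_le (hcov : IsCover 𝓜)
    (hcard : Nat.card (G ⧸ N) = p ^ 2) (hexp : ∀ x : G ⧸ N, x ^ p = 1)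
    (h𝓑 : #(supplements 𝓜 N) < p) (h𝓑σ : #(supplements 𝓜 N) < covNum G) {P : Subgroup G}
    (hPp : IsPGroup p P) (hP : P.map (mk' N) = ⊤) {c : G ⧸ N}
    (hc : c ∈ onlyInSupplements 𝓜 N) :
    ∃ B ∈ supplements 𝓜 N, P ⊓ N ≤ B ∧ ¬P ≤ B ∧ c ∈ (B ⊓ P).map (mk' N) := by
  obtain ⟨w, hw, hwB⟩ := hcov.exists_mem_forall_not_mem h𝓑σ hP
  obtain ⟨B, hB, hKB, hwB'⟩ := hcov.exists_mem_supplements_inf_comap_le hcard hexp h𝓑 hPp hP hc hw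
  obtain ⟨x, hxP, rfl⟩ : c ∈ P.map (mk' N) := hP ▸ mem_top c
  exact ⟨B, hB, (inf_le_inf_left _ (le_comap_mk' N _)).trans hKB,
    fun hPB => hwB B hB hPB hwB', ⟨x, ⟨hKB ⟨hxP, mem_zpowers _⟩, hxP⟩, rfl⟩⟩

/-- Otherwise `𝓛` and the images of the non-supplements would cover `G/N` by at most `p` proper
subgroups. -/
lemma card_supplements_le (h𝓜 : #𝓜 ≤ p + 1) (hcard : Nat.card (G ⧸ N) = p ^ 2)
    {M : Subgroup G} (hM : M ∈ 𝓜) (hMN : M.map (mk' N) ≠ ⊤) {𝓛 : Finset (Subgroup (G ⧸ N))}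
    (h𝓛 : ∀ L ∈ 𝓛, L ≠ ⊤) (hcov : ∀ x ∈ onlyInSupplements 𝓜 N, ∃ L ∈ 𝓛, x ∈ L) :
    #(supplements 𝓜 N) ≤ #𝓛 := by
  classical
  by_contra! h
  let 𝓗 := (𝓜 \ supplements 𝓜 N).image (map (mk' N)) ∪ 𝓛
  have h𝓗 : #𝓗 ≤ p := by
    have := card_sdiff_of_subset (supplements_subset (𝓜 := 𝓜) (N := N))
    have := card_le_card (supplements_subset (𝓜 := 𝓜) (N := N))
    have := card_image_le (s := 𝓜 \ supplements 𝓜 N) (f := map (mk' N))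
    exact (card_union_le _ _).trans (by omega)
  have hcov𝓗 (x : G ⧸ N) : ∃ H ∈ 𝓗, x ∈ H := by
    by_cases hx : x ∈ onlyInSupplements 𝓜 N
    · obtain ⟨L, hL, hxL⟩ := hcov x hx
      exact ⟨L, mem_union_right _ hL, hxL⟩
    · obtain ⟨X, hX, hXN, hxX⟩ := exists_mem_map_ne_top_of_not_mem hM hMN hx
      exact ⟨_, mem_union_left _ (mem_image_of_mem _ (mem_sdiff_supplements.2 ⟨hX, hXN⟩)), hxX⟩
  obtain ⟨H, hH, hHtop⟩ := ((IsPGroup.of_card hcard).to_subgroup ⊤).exists_le_of_forall_exists_mem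
    h𝓗 fun x _ => hcov𝓗 x
  rcases mem_union.1 hH with hH | hH
  · obtain ⟨X, hX, rfl⟩ := mem_image.1 hH
    exact (mem_sdiff_supplements.1 hX).2 (top_le_iff.1 hHtop)
  · exact h𝓛 H hH (top_le_iff.1 hHtop)

lemma IsMinimalCover.eq_of_mem_of_mk'_mem (hmin : IsMinimalCover 𝓜) (hσ : covNum G = p + 1)
    (hcard : Nat.card (G ⧸ N) = p ^ 2) (hexp : ∀ x : G ⧸ N, x ^ p = 1)
    (h𝓑 : #(supplements 𝓜 N) < p) {M : Subgroup G} (hM : M ∈ 𝓜) (hMN : M.map (mk' N) ≠ ⊤)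
    {P : Subgroup G} (hPp : IsPGroup p P) (hP : P.map (mk' N) = ⊤) {B₀ B₁ : Subgroup G}
    (hB₀ : B₀ ∈ supplements 𝓜 N) (hB₁ : B₁ ∈ supplements 𝓜 N) (hPN₀ : P ⊓ N ≤ B₀)
    (hPB₀ : ¬P ≤ B₀) {u : G} (huP : u ∈ P) (huB₀ : mk' N u ∈ (B₀ ⊓ P).map (mk' N))
    (huB₁ : u ∈ B₁) (hu : mk' N u ∈ onlyInSupplements 𝓜 N) : B₀ = B₁ := by
  classical
  by_contra hne
  let 𝓞 := (supplements 𝓜 N).filter fun B => P ⊓ N ≤ B ∧ ¬P ≤ B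
  have hne_top (B) (hB : B ∈ 𝓞) : (B ⊓ P).map (mk' N) ≠ ⊤ := fun h =>
    (mem_filter.1 hB).2.2 (le_of_inf_le_of_map_inf_eq_top (mem_filter.1 hB).2.1 h)
  have hline (B) (hB : B ∈ 𝓞) {x} (hx : x ∈ (B ⊓ P).map (mk' N)) (hx1 : x ≠ 1) :
      (B ⊓ P).map (mk' N) = zpowers x :=
    eq_zpowers_of_ne_top hcard hexp (hne_top B hB) hx hx1
  have hB₀𝓞 : B₀ ∈ 𝓞.erase B₁ := mem_erase.2 ⟨hne, mem_filter.2 ⟨hB₀, hPN₀, hPB₀⟩⟩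
  refine (card_supplements_le (hmin.2.trans hσ).le hcard hM hMN
    (𝓛 := (𝓞.erase B₁).image fun B => (B ⊓ P).map (mk' N)) ?_ fun x hx => ?_).not_gt ?_
  · intro L hL
    obtain ⟨B, hB, rfl⟩ := mem_image.1 hL
    exact hne_top B (mem_of_mem_erase hB)
  · obtain ⟨B, hB, hPN, hPB, hxB⟩ :=
      hmin.1.exists_mem_supplements_inf_le_not_le hcard hexp h𝓑 (by omega) hPp hP hx
    have hB𝓞 : B ∈ 𝓞 := mem_filter.2 ⟨hB, hPN, hPB⟩
    by_cases hBB₁ : B = B₁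
    · subst hBB₁
      refine ⟨_, mem_image_of_mem _ hB₀𝓞, ?_⟩
      rw [hline B₀ (mem_of_mem_erase hB₀𝓞) huB₀ hu.1, ← hline B hB𝓞 ⟨u, ⟨huB₁, huP⟩, rfl⟩ hu.1]
      exact hxB
    · exact ⟨_, mem_image_of_mem _ (mem_erase.2 ⟨hBB₁, hB𝓞⟩), hxB⟩
  · calc #((𝓞.erase B₁).image fun B => (B ⊓ P).map (mk' N))
        ≤ #((supplements 𝓜 N).erase B₁) :=
          card_image_le.trans (card_le_card (erase_subset_erase _ (filter_subset _ _)))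
      _ < #(supplements 𝓜 N) := card_erase_lt_of_mem hB₁

theorem IsMinimalCover.supplements_eq_empty (hmin : IsMinimalCover 𝓜) (hσ : covNum G = p + 1)
    (hcard : Nat.card (G ⧸ N) = p ^ 2) (hexp : ∀ x : G ⧸ N, x ^ p = 1) {M₁ M₂ : Subgroup G}
    (hM₁ : M₁ ∈ 𝓜) (hM₂ : M₂ ∈ 𝓜) (hne : M₁ ≠ M₂) (h₁ : M₁.map (mk' N) ≠ ⊤)
    (h₂ : M₂.map (mk' N) ≠ ⊤) : supplements 𝓜 N = ∅ := by
  classical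
  have h𝓜 : #𝓜 = p + 1 := hmin.2.trans hσ
  have h𝓑 : #(supplements 𝓜 N) + 2 ≤ p + 1 := by
    have : 2 ≤ #(𝓜 \ supplements 𝓜 N) := one_lt_card.2
      ⟨M₁, mem_sdiff_supplements.2 ⟨hM₁, h₁⟩, M₂, mem_sdiff_supplements.2 ⟨hM₂, h₂⟩, hne⟩
    rw [card_sdiff_of_subset supplements_subset, h𝓜] at this
    omega
  by_contra h𝓑₀
  obtain ⟨c₀, hc₀⟩ : (onlyInSupplements 𝓜 N).Nonempty := by
    by_contra hΩ
    have := card_supplements_le h𝓜.le hcard hM₁ h₁ (𝓛 := ∅) (by simp)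
      fun x hx => (hΩ ⟨x, hx⟩).elim
    exact h𝓑₀ (card_eq_zero.1 (Nat.le_zero.1 this))
  obtain ⟨P⟩ : Nonempty (Sylow p G) := inferInstance
  have hP := P.map_eq_top_of_isPGroup (mk'_surjective N) (IsPGroup.of_card hcard)
  obtain ⟨u, huP, rfl⟩ : c₀ ∈ (P : Subgroup G).map (mk' N) := hP ▸ mem_top c₀
  obtain ⟨B₀, hB₀, hPN₀, hPB₀, huB₀⟩ := hmin.1.exists_mem_supplements_inf_le_not_le hcard hexp
    (by omega) (by omega) P.isPGroup' hP hc₀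
  obtain ⟨v, hvN, hvB₀⟩ : ∃ v ∈ N, v ∉ B₀ := by
    by_contra! h
    refine hmin.1.1 B₀ (supplements_subset hB₀) (Eq.symm ?_)
    simpa [sup_eq_right.2 (show N ≤ B₀ from h), (mem_supplements.1 hB₀).2] using
      comap_map_mk' N B₀
  obtain ⟨B₁, hB₁, huB₁, hvB₁⟩ :=
    hmin.1.exists_mem_supplements_mem_and_mem hcard hexp (by omega) P.isPGroup' huP hc₀ hvN
  exact hvB₀ (hmin.eq_of_mem_of_mk'_mem hσ hcard hexp (by omega) hM₁ h₁ P.isPGroup' hP hB₀ hB₁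
    hPN₀ hPB₀ huP huB₀ huB₁ hc₀ ▸ hvB₁)

end Supplements

section Lines

variable {G : Type*} [Group G] [Finite G] {p : ℕ} [Fact p.Prime] {𝓜 : Finset (Subgroup G)}
  {N : Subgroup G} [N.Normal]

lemma IsMinimalCover.mem_of_mk'_mem_zpowers (hmin : IsMinimalCover 𝓜)
    (hcard : Nat.card (G ⧸ N) = p ^ 2) (hexp : ∀ x : G ⧸ N, x ^ p = 1)
    (hgood : ∀ X ∈ 𝓜, X.map (mk' N) ≠ ⊤) {X : Subgroup G} (hX : X ∈ 𝓜) {c : G ⧸ N} (hc : c ≠ 1)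
    (hXc : X.map (mk' N) ≤ zpowers c) {g : G} (hg : mk' N g ∈ zpowers c) (hg1 : mk' N g ≠ 1) :
    g ∈ X := by
  obtain ⟨Y, hY, hgY⟩ := hmin.1.2 g
  have hYc : Y.map (mk' N) = zpowers c :=
    (eq_zpowers_of_ne_top hcard hexp (hgood Y hY) (mem_map_of_mem _ hgY) hg1).trans
      (eq_zpowers_of_ne_top hcard hexp (zpowers_ne_top hcard hexp hc) hg hg1).symm
  have hcomap : (zpowers c).comap (mk' N) ≠ ⊤ := by
    rw [← comap_top (mk' N)]
    exact (comap_injective (mk'_surjective N)).ne (zpowers_ne_top hcard hexp hc)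
  rwa [hmin.eq_of_le_of_le hX hY hcomap (map_le_iff_le_comap.1 hXc)
    (map_le_iff_le_comap.1 hYc.le)]

lemma IsMinimalCover.le_and_exists_map_eq_zpowers (hmin : IsMinimalCover 𝓜)
    (hcard : Nat.card (G ⧸ N) = p ^ 2) (hexp : ∀ x : G ⧸ N, x ^ p = 1)
    (hgood : ∀ X ∈ 𝓜, X.map (mk' N) ≠ ⊤) {X : Subgroup G} (hX : X ∈ 𝓜) :
    N ≤ X ∧ ∃ c ≠ 1, X.map (mk' N) = zpowers c := by
  obtain ⟨c, hc, hXc⟩ := exists_le_zpowers hcard hexp (hgood X hX)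
  have hmem {g : G} := hmin.mem_of_mk'_mem_zpowers hcard hexp hgood hX hc hXc (g := g)
  obtain ⟨g, rfl⟩ := mk'_surjective N c
  refine ⟨fun n hn => ?_, _, hc, hXc.antisymm fun d hd => ?_⟩
  · have hgn : mk' N (g * n) = mk' N g := by simp [(QuotientGroup.eq_one_iff n).2 hn]
    have := X.mul_mem (X.inv_mem (hmem (mem_zpowers _) hc))
      (hmem (g := g * n) (hgn ▸ mem_zpowers _) (hgn ▸ hc))
    simpa using this
  · by_cases hd1 : d = 1
    · exact hd1 ▸ one_mem _
    obtain ⟨h, rfl⟩ := mk'_surjective N d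
    exact mem_map_of_mem _ (hmem hd hd1)

theorem IsMinimalCover.le_and_map_eq_coatoms (hmin : IsMinimalCover 𝓜) (hσ : covNum G = p + 1)
    (hcard : Nat.card (G ⧸ N) = p ^ 2) (hexp : ∀ x : G ⧸ N, x ^ p = 1) {M₁ M₂ : Subgroup G}
    (hM₁ : M₁ ∈ 𝓜) (hM₂ : M₂ ∈ 𝓜) (hne : M₁ ≠ M₂) (hN₁ : N ≤ M₁) (hN₂ : N ≤ M₂) :
    (∀ X ∈ 𝓜, N ≤ X) ∧
      {Y | ∃ X ∈ 𝓜, Y = X.map (mk' N)} = {Y : Subgroup (G ⧸ N) | IsCoatom Y} := by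
  have hproper {M} (hM : M ∈ 𝓜) (hNM : N ≤ M) : M.map (mk' N) ≠ ⊤ := fun h =>
    hmin.1.1 M hM (by simpa [sup_eq_right.2 hNM, h] using (comap_map_mk' N M).symm)
  have hgood (X) (hX : X ∈ 𝓜) : X.map (mk' N) ≠ ⊤ := fun h => by
    simpa [hmin.supplements_eq_empty hσ hcard hexp hM₁ hM₂ hne (hproper hM₁ hN₁)
      (hproper hM₂ hN₂)] using mem_supplements.2 ⟨hX, h⟩
  have hlines (X) (hX : X ∈ 𝓜) := hmin.le_and_exists_map_eq_zpowers hcard hexp hgood hX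
  refine ⟨fun X hX => (hlines X hX).1, Set.ext fun Y => ⟨?_, fun hY => ?_⟩⟩
  · rintro ⟨X, hX, rfl⟩
    obtain ⟨c, hc, hXc⟩ := (hlines X hX).2
    exact hXc ▸ isCoatom_zpowers hcard hexp hc
  · obtain ⟨c, hc, hYc⟩ := exists_le_zpowers hcard hexp hY.1
    have hY' : Y = zpowers c :=
      ((hY.le_iff.1 hYc).resolve_left (zpowers_ne_top hcard hexp hc)).symm
    obtain ⟨g, rfl⟩ := mk'_surjective N c
    obtain ⟨X, hX, hgX⟩ := hmin.1.2 g
    exact ⟨X, hX, hY'.trans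
      (eq_zpowers_of_ne_top hcard hexp (hgood X hX) (mem_map_of_mem _ hgX) hc).symm⟩

end Lines

theorem stmt19_general (G : Type*) [Group G] [Finite G]
    (𝓜 : Finset (Subgroup G)) (hmin : IsMinimalCover 𝓜)
    (M₁ M₂ : Subgroup G) (hM₁ : M₁ ∈ 𝓜) (hM₂ : M₂ ∈ 𝓜) (hne : M₁ ≠ M₂)
    (hn₁ : M₁.Normal) (hn₂ : M₂.Normal)
    (p : ℕ) (hp : p.Prime)
    (hiso :
      haveI : (M₁ ⊓ M₂).Normal := ⟨fun n hn g => ⟨hn₁.conj_mem n (Subgroup.mem_inf.mp hn).1 g, hn₂.conj_mem n (Subgroup.mem_inf.mp hn).2 g⟩⟩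
      Nonempty ((G ⧸ (M₁ ⊓ M₂)) ≃*
        (Multiplicative (ZMod p) × Multiplicative (ZMod p))))
    (hσ : covNum G = p + 1) :
    haveI : (M₁ ⊓ M₂).Normal := ⟨fun n hn g => ⟨hn₁.conj_mem n (Subgroup.mem_inf.mp hn).1 g, hn₂.conj_mem n (Subgroup.mem_inf.mp hn).2 g⟩⟩
    (∀ X ∈ 𝓜, M₁ ⊓ M₂ ≤ X) ∧
    {Y : Subgroup (G ⧸ (M₁ ⊓ M₂)) |
        ∃ X ∈ 𝓜, Y = Subgroup.map (QuotientGroup.mk' (M₁ ⊓ M₂)) X} =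
      {Y : Subgroup (G ⧸ (M₁ ⊓ M₂)) | IsCoatom Y} := by
  have : Fact p.Prime := ⟨hp⟩
  obtain ⟨e⟩ := hiso
  have hcard : Nat.card (G ⧸ (M₁ ⊓ M₂)) = p ^ 2 := by
    simp [Nat.card_congr e.toEquiv, sq]
  have hexp (x : G ⧸ (M₁ ⊓ M₂)) : x ^ p = 1 := by
    refine e.injective ?_
    ext <;> simp
  exact hmin.le_and_map_eq_coatoms hσ hcard hexp hM₁ hM₂ hne inf_le_left inf_le_right

theorem stmt19 (G : Type*) [Group G] [Finite G]
    (𝓜 : Finset (Subgroup G)) (hmin : IsMinimalCover 𝓜)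
    (M₁ M₂ : Subgroup G) (hM₁ : M₁ ∈ 𝓜) (hM₂ : M₂ ∈ 𝓜) (hne : M₁ ≠ M₂)
    (hn₁ : M₁.Normal) (hn₂ : M₂.Normal)
    (p : ℕ) (hp : p.Prime) (hi₁ : M₁.index = p) (hi₂ : M₂.index = p)
    (hiso :
      haveI : (M₁ ⊓ M₂).Normal := ⟨fun n hn g => ⟨hn₁.conj_mem n (Subgroup.mem_inf.mp hn).1 g, hn₂.conj_mem n (Subgroup.mem_inf.mp hn).2 g⟩⟩
      Nonempty ((G ⧸ (M₁ ⊓ M₂)) ≃*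
        (Multiplicative (ZMod p) × Multiplicative (ZMod p))))
    (hσ : covNum G = p + 1) :
    haveI : (M₁ ⊓ M₂).Normal := ⟨fun n hn g => ⟨hn₁.conj_mem n (Subgroup.mem_inf.mp hn).1 g, hn₂.conj_mem n (Subgroup.mem_inf.mp hn).2 g⟩⟩
    (∀ X ∈ 𝓜, M₁ ⊓ M₂ ≤ X) ∧
    {Y : Subgroup (G ⧸ (M₁ ⊓ M₂)) |
        ∃ X ∈ 𝓜, Y = Subgroup.map (QuotientGroup.mk' (M₁ ⊓ M₂)) X} =
      {Y : Subgroup (G ⧸ (M₁ ⊓ M₂)) | IsCoatom Y} :=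
  stmt19_general G 𝓜 hmin M₁ M₂ hM₁ hM₂ hne hn₁ hn₂ p hp hiso hσ
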